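/- Let μ and ν be Borel probability measures on ℝ with quantile functions Q_μ and Q_ν, and suppose both have finite second moments. Then the maximum of ∫ a·b dπ(a,b) over all couplings π of μ and ν equals ∫₀¹ Q_μ(t) Q_ν(t) dt, attained by the comonotonic coupling (Q_μ(ξ), Q_ν(ξ)) with ξ uniform on (0,1). -/

import Mathlib

open MeasureTheory Set

/-- Quantile function of a measure on ℝ: `Q_μ(t) = inf {x : μ((-∞,x]) ≥ t}`. -/
noncomputable def quantile (μ : Measure ℝ) (t : ℝ) : ℝ :=
  sInf {x : ℝ | t ≤ (μ (Iic x)).toReal}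

/-- A coupling of `μ` and `ν` is a measure on `ℝ × ℝ` with first marginal `μ`
and second marginal `ν`. -/
def IsCoupling (π : Measure (ℝ × ℝ)) (μ ν : Measure ℝ) : Prop :=
  π.map Prod.fst = μ ∧ π.map Prod.snd = ν

open ProbabilityTheory

/-!
Hoeffding's identity `a * b = ∬ (𝟙[s < a] - 𝟙[s < 0]) (𝟙[t < b] - 𝟙[t < 0]) ds dt` and Fubini
write `∫ a * b dπ` as the integral over `(s, t)` of `π (Ioi s ×ˢ Ioi t)` plus terms that only
depend on the marginals. Every coupling satisfies
`π (Ioi s ×ˢ Ioi t) ≤ min (μ (Ioi s)) (ν (Ioi t))`, and the comonotone coupling `(Q_μ(ξ), Q_ν(ξ))`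
attains this bound because `s < Q_μ u ↔ F_μ s < u` for `u ∈ (0, 1)`.
-/

lemma volume_Iic_inter_Ioo_zero_one {c : ℝ} (h₁ : c ≤ 1) :
    volume (Iic c ∩ Ioo 0 1) = ENNReal.ofReal c := by
  refine le_antisymm ?_ ?_
  · calc volume (Iic c ∩ Ioo 0 1) ≤ volume (Ioc 0 c) :=
          measure_mono fun u hu => ⟨hu.2.1, hu.1⟩
      _ = ENNReal.ofReal c := by rw [Real.volume_Ioc, sub_zero]
  · calc ENNReal.ofReal c = volume (Ioo 0 c) := by rw [Real.volume_Ioo, sub_zero]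
      _ ≤ volume (Iic c ∩ Ioo 0 1) :=
          measure_mono fun u hu => ⟨hu.2.le, hu.1, hu.2.trans_le h₁⟩

lemma Ioi_inter_Ioo_zero_one {c : ℝ} (h₀ : 0 ≤ c) : Ioi c ∩ Ioo 0 1 = Ioo c 1 := by
  ext u
  simp only [mem_inter_iff, mem_Ioi, mem_Ioo]
  constructor
  · rintro ⟨hcu, -, hu1⟩; exact ⟨hcu, hu1⟩
  · rintro ⟨hcu, hu1⟩; exact ⟨hcu, h₀.trans_lt hcu, hu1⟩

lemma measure_Ioi_eq_ofReal_one_sub_cdf (μ : Measure ℝ) [IsProbabilityMeasure μ] (x : ℝ) :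
    μ (Ioi x) = ENNReal.ofReal (1 - cdf μ x) := by
  rw [← compl_Iic, prob_compl_eq_one_sub measurableSet_Iic, ← ofReal_cdf,
    ← ENNReal.ofReal_one, ← ENNReal.ofReal_sub _ (cdf_nonneg μ x)]

section Quantile

variable {μ : Measure ℝ} [IsProbabilityMeasure μ] {t x : ℝ}

lemma quantile_eq_sInf_cdf : quantile μ t = sInf {x | t ≤ cdf μ x} := by
  simp_rw [quantile, cdf_eq_real, measureReal_def]

lemma quantile_le_iff (ht : t ∈ Ioo 0 1) : quantile μ t ≤ x ↔ t ≤ cdf μ x := by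
  rw [quantile_eq_sInf_cdf]
  set S := {y : ℝ | t ≤ cdf μ y}
  have hne : S.Nonempty := ((tendsto_cdf_atTop μ).eventually (eventually_ge_nhds ht.2)).exists
  have hbdd : BddBelow S := by
    obtain ⟨y₀, hy₀⟩ := ((tendsto_cdf_atBot μ).eventually (eventually_lt_nhds ht.1)).exists
    exact ⟨y₀, fun y hy => le_of_not_gt fun hlt => (hy.trans (monotone_cdf μ hlt.le)).not_gt hy₀⟩
  -- the infimum is attained because the cdf is right-continuous
  have hmem : sInf S ∈ S := by
    refine ge_of_tendsto (((cdf μ).right_continuous _).mono Ioi_subset_Ici_self).tendsto ?_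
    filter_upwards [self_mem_nhdsWithin] with y hy
    obtain ⟨z, hz, hzy⟩ := (csInf_lt_iff hbdd hne).1 hy
    exact hz.trans (monotone_cdf μ hzy.le)
  exact ⟨fun h => hmem.trans (monotone_cdf μ h), fun h => csInf_le hbdd h⟩

lemma lt_quantile_iff (ht : t ∈ Ioo 0 1) : x < quantile μ t ↔ cdf μ x < t := by
  simpa only [not_le] using (quantile_le_iff ht).not

lemma monotoneOn_quantile : MonotoneOn (quantile μ) (Ioo 0 1) := fun _ ht _ ht' htt' =>
  (quantile_le_iff ht).2 (htt'.trans ((quantile_le_iff ht').1 le_rfl))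

lemma aemeasurable_quantile : AEMeasurable (quantile μ) (volume.restrict (Ioo 0 1)) :=
  aemeasurable_restrict_of_monotoneOn measurableSet_Ioo monotoneOn_quantile

lemma map_quantile_volume_restrict_Ioo :
    (volume.restrict (Ioo 0 1)).map (quantile μ) = μ := by
  refine Measure.ext_of_Iic _ _ fun x => ?_
  have hpre : quantile μ ⁻¹' Iic x ∩ Ioo 0 1 = Iic (cdf μ x) ∩ Ioo 0 1 := by
    ext u
    simp only [mem_inter_iff, mem_preimage, mem_Iic, and_congr_left_iff]
    exact quantile_le_iff
  rw [Measure.map_apply_of_aemeasurable aemeasurable_quantile measurableSet_Iic,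
    Measure.restrict_apply' measurableSet_Ioo, hpre,
    volume_Iic_inter_Ioo_zero_one (cdf_le_one μ x), ofReal_cdf]

end Quantile

noncomputable def comonotoneCoupling (μ ν : Measure ℝ) : Measure (ℝ × ℝ) :=
  (volume.restrict (Ioo 0 1)).map fun t => (quantile μ t, quantile ν t)

section Comonotone
variable (μ ν : Measure ℝ) [IsProbabilityMeasure μ] [IsProbabilityMeasure ν]

lemma aemeasurable_quantile_prodMk :
    AEMeasurable (fun t => (quantile μ t, quantile ν t)) (volume.restrict (Ioo 0 1)) :=
  aemeasurable_quantile.prodMk aemeasurable_quantile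

lemma isCoupling_comonotoneCoupling : IsCoupling (comonotoneCoupling μ ν) μ ν := by
  constructor <;>
  · rw [comonotoneCoupling, AEMeasurable.map_map_of_aemeasurable (by fun_prop)
      (aemeasurable_quantile_prodMk μ ν)]
    exact map_quantile_volume_restrict_Ioo

lemma comonotoneCoupling_Ioi_prod_Ioi (s t : ℝ) :
    comonotoneCoupling μ ν (Ioi s ×ˢ Ioi t) = min (μ (Ioi s)) (ν (Ioi t)) := by
  have hpre : (fun u => (quantile μ u, quantile ν u)) ⁻¹' (Ioi s ×ˢ Ioi t) ∩ Ioo 0 1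
      = Ioi (max (cdf μ s) (cdf ν t)) ∩ Ioo 0 1 := by
    ext u
    simp only [mk_preimage_prod, mem_inter_iff, mem_preimage, mem_Ioi, max_lt_iff,
      and_congr_left_iff]
    intro hu
    rw [lt_quantile_iff hu, lt_quantile_iff hu]
  rw [comonotoneCoupling, Measure.map_apply_of_aemeasurable (aemeasurable_quantile_prodMk μ ν)
      (measurableSet_Ioi.prod measurableSet_Ioi), Measure.restrict_apply' measurableSet_Ioo, hpre,
    Ioi_inter_Ioo_zero_one (le_max_of_le_left (cdf_nonneg μ s)), Real.volume_Ioo,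
    measure_Ioi_eq_ofReal_one_sub_cdf, measure_Ioi_eq_ofReal_one_sub_cdf, ← ENNReal.ofReal_min,
    min_sub_sub_left]

lemma integral_fst_mul_snd_comonotoneCoupling :
    ∫ p, p.1 * p.2 ∂comonotoneCoupling μ ν = ∫ t in Ioo 0 1, quantile μ t * quantile ν t :=
  integral_map (aemeasurable_quantile_prodMk μ ν) (by fun_prop)

end Comonotone

noncomputable def signedIndicator (a s : ℝ) : ℝ :=
  (if s < a then 1 else 0) - (if s < 0 then 1 else 0)

lemma signedIndicator_eq_indicator_sub_indicator (a s : ℝ) :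
    signedIndicator a s = (Ico 0 a).indicator 1 s - (Ico a 0).indicator 1 s := by
  simp only [signedIndicator, indicator_apply, mem_Ico, Pi.one_apply]
  split_ifs <;> grind

lemma abs_signedIndicator (a s : ℝ) :
    |signedIndicator a s| = (Ico 0 a).indicator 1 s + (Ico a 0).indicator 1 s := by
  simp only [signedIndicator, indicator_apply, mem_Ico, Pi.one_apply]
  split_ifs <;> grind

lemma measurable_signedIndicator : Measurable (Function.uncurry signedIndicator) :=
  (Measurable.ite (measurableSet_lt measurable_snd measurable_fst) measurable_const
    measurable_const).sub
    (Measurable.ite (measurableSet_lt measurable_snd measurable_const) measurable_const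
      measurable_const)

lemma integrable_indicator_Ico_one (a b : ℝ) : Integrable ((Ico a b).indicator (1 : ℝ → ℝ)) :=
  (integrable_indicator_iff measurableSet_Ico).2 (integrableOn_const measure_Ico_lt_top.ne)

lemma integral_indicator_Ico_one (a b : ℝ) :
    ∫ s, (Ico a b).indicator (1 : ℝ → ℝ) s = max (b - a) 0 := by
  rw [integral_indicator_one measurableSet_Ico, Real.volume_real_Ico]

lemma integrable_signedIndicator (a : ℝ) : Integrable (signedIndicator a) := by
  simp_rw [funext (signedIndicator_eq_indicator_sub_indicator a)]
  exact (integrable_indicator_Ico_one 0 a).sub (integrable_indicator_Ico_one a 0)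

lemma integral_signedIndicator (a : ℝ) : ∫ s, signedIndicator a s = a := by
  simp_rw [signedIndicator_eq_indicator_sub_indicator]
  rw [integral_sub (integrable_indicator_Ico_one 0 a) (integrable_indicator_Ico_one a 0),
    integral_indicator_Ico_one, integral_indicator_Ico_one, sub_zero, zero_sub,
    max_zero_sub_eq_self]

lemma integral_abs_signedIndicator (a : ℝ) : ∫ s, |signedIndicator a s| = |a| := by
  simp_rw [abs_signedIndicator]
  rw [integral_add (integrable_indicator_Ico_one 0 a) (integrable_indicator_Ico_one a 0),
    integral_indicator_Ico_one, integral_indicator_Ico_one, sub_zero, zero_sub,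
    max_zero_add_max_neg_zero_eq_abs_self]

lemma integral_signedIndicator_mul_signedIndicator (a b : ℝ) :
    ∫ z : ℝ × ℝ, signedIndicator a z.1 * signedIndicator b z.2 ∂(volume.prod volume) = a * b := by
  rw [integral_prod_mul (signedIndicator a) (signedIndicator b), integral_signedIndicator,
    integral_signedIndicator]

lemma integrable_signedIndicator_mul_signedIndicator {π : Measure (ℝ × ℝ)}
    (hπ : Integrable (fun p : ℝ × ℝ => p.1 * p.2) π) :
    Integrable (fun q : (ℝ × ℝ) × (ℝ × ℝ) =>
      signedIndicator q.1.1 q.2.1 * signedIndicator q.1.2 q.2.2) (π.prod (volume.prod volume)) := by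
  have hmeas : Measurable fun q : (ℝ × ℝ) × (ℝ × ℝ) =>
      signedIndicator q.1.1 q.2.1 * signedIndicator q.1.2 q.2.2 :=
    (measurable_signedIndicator.comp (measurable_fst.fst.prodMk measurable_snd.fst)).mul
      (measurable_signedIndicator.comp (measurable_fst.snd.prodMk measurable_snd.snd))
  refine (integrable_prod_iff hmeas.aestronglyMeasurable).2
    ⟨ae_of_all _ fun p =>
      (integrable_signedIndicator p.1).mul_prod (integrable_signedIndicator p.2), ?_⟩
  have hnorm : ∀ p : ℝ × ℝ, ∫ z : ℝ × ℝ, ‖signedIndicator p.1 z.1 * signedIndicator p.2 z.2‖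
      ∂(volume.prod volume) = ‖p.1 * p.2‖ := fun p => by
    simp_rw [norm_mul, Real.norm_eq_abs]
    rw [integral_prod_mul (fun s => |signedIndicator p.1 s|) (fun t => |signedIndicator p.2 t|),
      integral_abs_signedIndicator, integral_abs_signedIndicator]
  simp_rw [hnorm]
  exact hπ.norm

lemma integral_fst_mul_snd_eq_integral_integral_signedIndicator {π : Measure (ℝ × ℝ)} [SFinite π]
    (hπ : Integrable (fun p : ℝ × ℝ => p.1 * p.2) π) :
    ∫ p, p.1 * p.2 ∂π =
      ∫ z, ∫ p, signedIndicator p.1 z.1 * signedIndicator p.2 z.2 ∂π ∂(volume.prod volume) := by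
  refine (integral_congr_ae (ae_of_all _ fun p => ?_)).trans
    (integral_integral_swap (integrable_signedIndicator_mul_signedIndicator hπ))
  exact (integral_signedIndicator_mul_signedIndicator p.1 p.2).symm

namespace IsCoupling

variable {π : Measure (ℝ × ℝ)} {μ ν : Measure ℝ}

lemma measure_preimage_fst (hπ : IsCoupling π μ ν) {s : Set ℝ} (hs : MeasurableSet s) :
    π (Prod.fst ⁻¹' s) = μ s := by
  rw [← hπ.1, Measure.map_apply measurable_fst hs]

lemma measure_preimage_snd (hπ : IsCoupling π μ ν) {t : Set ℝ} (ht : MeasurableSet t) :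
    π (Prod.snd ⁻¹' t) = ν t := by
  rw [← hπ.2, Measure.map_apply measurable_snd ht]

lemma isProbabilityMeasure [IsProbabilityMeasure μ] (hπ : IsCoupling π μ ν) :
    IsProbabilityMeasure π :=
  ⟨by simpa using hπ.measure_preimage_fst MeasurableSet.univ⟩

lemma measure_prod_le (hπ : IsCoupling π μ ν) {s t : Set ℝ} (hs : MeasurableSet s)
    (ht : MeasurableSet t) : π (s ×ˢ t) ≤ min (μ s) (ν t) :=
  le_min ((measure_mono (prod_subset_preimage_fst _ _)).trans (hπ.measure_preimage_fst hs).le)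
    ((measure_mono (prod_subset_preimage_snd _ _)).trans (hπ.measure_preimage_snd ht).le)

lemma integrable_fst_mul_snd (hπ : IsCoupling π μ ν) (hμ : MemLp id 2 μ) (hν : MemLp id 2 ν) :
    Integrable (fun p : ℝ × ℝ => p.1 * p.2) π := by
  rw [← hπ.1] at hμ
  rw [← hπ.2] at hν
  exact (hμ.comp_of_map measurable_fst.aemeasurable).integrable_mul
    (hν.comp_of_map measurable_snd.aemeasurable)

lemma integral_signedIndicator_mul_signedIndicator [IsProbabilityMeasure μ]
    (hπ : IsCoupling π μ ν) (s t : ℝ) :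
    ∫ p, signedIndicator p.1 s * signedIndicator p.2 t ∂π =
      π.real (Ioi s ×ˢ Ioi t) - (if t < 0 then μ.real (Ioi s) else 0)
        - (if s < 0 then ν.real (Ioi t) else 0) + (if s < 0 ∧ t < 0 then 1 else 0) := by
  have := hπ.isProbabilityMeasure
  have hexpand : ∀ p : ℝ × ℝ, signedIndicator p.1 s * signedIndicator p.2 t =
      (Ioi s ×ˢ Ioi t).indicator 1 p - (if t < 0 then 1 else 0) * (Prod.fst ⁻¹' Ioi s).indicator 1 p
        - (if s < 0 then 1 else 0) * (Prod.snd ⁻¹' Ioi t).indicator 1 p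
        + (if s < 0 ∧ t < 0 then 1 else 0) := fun p => by
    simp only [signedIndicator, indicator_apply, mem_prod, mem_Ioi, Pi.one_apply]
    split_ifs <;> simp_all
  have hint : ∀ S : Set (ℝ × ℝ), MeasurableSet S → Integrable (S.indicator 1) π :=
    fun S hS => (integrable_const (1 : ℝ)).indicator hS
  have hquad : MeasurableSet (Ioi s ×ˢ Ioi t) := measurableSet_Ioi.prod measurableSet_Ioi
  have hfst : MeasurableSet (Prod.fst ⁻¹' Ioi s : Set (ℝ × ℝ)) := measurable_fst measurableSet_Ioi
  have hsnd : MeasurableSet (Prod.snd ⁻¹' Ioi t : Set (ℝ × ℝ)) := measurable_snd measurableSet_Ioi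
  simp_rw [hexpand]
  rw [integral_add ?_ (integrable_const _), integral_sub ?_ ((hint _ hsnd).const_mul _),
    integral_sub (hint _ hquad) ((hint _ hfst).const_mul _), integral_const_mul, integral_const_mul,
    integral_indicator_one hquad, integral_indicator_one hfst, integral_indicator_one hsnd,
    integral_const]
  · simp only [measureReal_def, hπ.measure_preimage_fst measurableSet_Ioi,
      hπ.measure_preimage_snd measurableSet_Ioi]
    split_ifs <;> simp
  · exact (hint _ hquad).sub ((hint _ hfst).const_mul _)
  · exact ((hint _ hquad).sub ((hint _ hfst).const_mul _)).sub ((hint _ hsnd).const_mul _)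

lemma integral_fst_mul_snd_le [IsProbabilityMeasure μ] {π' : Measure (ℝ × ℝ)}
    (hπ : IsCoupling π μ ν) (hπ' : IsCoupling π' μ ν) (hμ : MemLp id 2 μ) (hν : MemLp id 2 ν)
    (h : ∀ s t, π (Ioi s ×ˢ Ioi t) ≤ π' (Ioi s ×ˢ Ioi t)) :
    ∫ p, p.1 * p.2 ∂π ≤ ∫ p, p.1 * p.2 ∂π' := by
  have := hπ.isProbabilityMeasure
  have := hπ'.isProbabilityMeasure
  have hint := hπ.integrable_fst_mul_snd hμ hν
  have hint' := hπ'.integrable_fst_mul_snd hμ hν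
  rw [integral_fst_mul_snd_eq_integral_integral_signedIndicator hint,
    integral_fst_mul_snd_eq_integral_integral_signedIndicator hint']
  refine integral_mono (integrable_signedIndicator_mul_signedIndicator hint).integral_prod_right
    (integrable_signedIndicator_mul_signedIndicator hint').integral_prod_right fun z => ?_
  rw [hπ.integral_signedIndicator_mul_signedIndicator,
    hπ'.integral_signedIndicator_mul_signedIndicator]
  gcongr
  exact ENNReal.toReal_mono (measure_ne_top _ _) (h z.1 z.2)

end IsCoupling

/-- Upper Hoeffding–Fréchet bound: the maximum of `∫ a·b dπ` over couplings of `μ`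
and `ν` equals `∫₀¹ Q_μ(t) Q_ν(t) dt`, attained by the comonotonic coupling. -/
theorem stmt0 (μ ν : Measure ℝ) [IsProbabilityMeasure μ] [IsProbabilityMeasure ν]
    (hμ2 : MemLp id 2 μ) (hν2 : MemLp id 2 ν) :
    IsGreatest ((fun π : Measure (ℝ × ℝ) => ∫ p, p.1 * p.2 ∂π) '' {π | IsCoupling π μ ν})
      (∫ t in Ioo (0:ℝ) 1, quantile μ t * quantile ν t) ∧
    IsCoupling ((volume.restrict (Ioo (0:ℝ) 1)).map
      (fun t => (quantile μ t, quantile ν t))) μ ν ∧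
    (∫ p, p.1 * p.2
        ∂((volume.restrict (Ioo (0:ℝ) 1)).map (fun t => (quantile μ t, quantile ν t))))
      = ∫ t in Ioo (0:ℝ) 1, quantile μ t * quantile ν t := by
  have hc := isCoupling_comonotoneCoupling μ ν
  have hval := integral_fst_mul_snd_comonotoneCoupling μ ν
  refine ⟨⟨⟨_, hc, hval⟩, ?_⟩, hc, hval⟩
  rintro _ ⟨π, hπ, rfl⟩
  rw [← hval]
  refine hπ.integral_fst_mul_snd_le hc hμ2 hν2 fun s t => ?_
  rw [comonotoneCoupling_Ioi_prod_Ioi]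
  exact hπ.measure_prod_le measurableSet_Ioi measurableSet_Ioi
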